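/- Let 𝔖 = {R_1, …, R_L} with L > 0 be a simple semi-Thue system over {0, 1, …, K}, let m > 0, and let a_1, …, a_{m+1} ∈ {0, 1, …, K}. If a_1 … a_{m+1} ⇒* 1^{m+1}, then there exists M ∈ Q_m such that Γ_m ⊢ M : κ, S_G(M)[p_1 := G_1^0, …, p_m := G_m^0] =β π_1, and S_G(M)[p_1 := G_1^i, …, p_m := G_m^i] =β π_{a_i} for every i ∈ {1, …, m+1}. -/

import Mathlib

set_option maxHeartbeats 1000000

/-- Untyped λ-terms with de Bruijn indices. -/
inductive Tm : Type
  | var : ℕ → Tm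
  | app : Tm → Tm → Tm
  | lam : Tm → Tm
deriving DecidableEq

/-- Simple types over the single ground atom ι. -/
inductive Ty : Type
  | atom : Ty
  | arr : Ty → Ty → Ty
deriving DecidableEq

/-- Lift a renaming under a binder. -/
def upRen (ξ : ℕ → ℕ) : ℕ → ℕ
  | 0 => 0
  | n + 1 => ξ n + 1

/-- Renaming of de Bruijn variables. -/
def rename (ξ : ℕ → ℕ) : Tm → Tm
  | .var n => .var (ξ n)
  | .app s t => .app (rename ξ s) (rename ξ t)
  | .lam s => .lam (rename (upRen ξ) s)

/-- Lift a substitution under a binder. -/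
def up (σ : ℕ → Tm) : ℕ → Tm
  | 0 => .var 0
  | n + 1 => rename Nat.succ (σ n)

/-- Parallel (capture-avoiding) substitution. -/
def subst (σ : ℕ → Tm) : Tm → Tm
  | .var n => σ n
  | .app s t => .app (subst σ s) (subst σ t)
  | .lam s => .lam (subst (up σ) s)

/-- Cons a term onto a substitution. -/
def scons (N : Tm) (σ : ℕ → Tm) : ℕ → Tm
  | 0 => N
  | n + 1 => σ n

/-- Substitution of the topmost free variable: `M[x₀ := N]` (β-substitution). -/
def subst1 (N M : Tm) : Tm := subst (scons N Tm.var) M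

/-- β-reduction: contextual closure of `(λx.M) N →β M[x := N]`. -/
inductive Step : Tm → Tm → Prop
  | beta (s t : Tm) : Step (.app (.lam s) t) (subst1 t s)
  | appL {s s' : Tm} (t : Tm) : Step s s' → Step (.app s t) (.app s' t)
  | appR (s : Tm) {t t' : Tm} : Step t t' → Step (.app s t) (.app s t')
  | lam {s s' : Tm} : Step s s' → Step (.lam s) (.lam s')

/-- β-equivalence: reflexive, transitive, symmetric closure of β-reduction. -/
def Conv (M N : Tm) : Prop := Relation.EqvGen Step M N

/-- A term is in normal form if it admits no β-reduction step. -/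
def NormalTm (M : Tm) : Prop := ∀ N, ¬ Step M N

/-- Simple type system (de Bruijn contexts as lists, innermost binder first). -/
inductive Stlc : List Ty → Tm → Ty → Prop
  | var {Γ : List Ty} {x : ℕ} {t : Ty} : Γ[x]? = some t → Stlc Γ (.var x) t
  | app {Γ : List Ty} {M N : Tm} {s t : Ty} :
      Stlc Γ M (.arr s t) → Stlc Γ N s → Stlc Γ (.app M N) t
  | lam {Γ : List Ty} {M : Tm} {s t : Ty} :
      Stlc (s :: Γ) M t → Stlc Γ (.lam M) (.arr s t)

/-- The identity term `I = λx.x`. -/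
def Itm : Tm := .lam (.var 0)

/-- `n` nested λ-abstractions. -/
def lamN : ℕ → Tm → Tm
  | 0, M => M
  | n + 1, M => .lam (lamN n M)

/-- Iterated application `M N₁ … Nₖ`. -/
def appList (M : Tm) (l : List Tm) : Tm := l.foldl .app M

/-- `n`-fold arrow type `ι → … → ι → t`. -/
def arrN : ℕ → Ty → Ty
  | 0, t => t
  | n + 1, t => .arr .atom (arrN n t)

/-- A rewrite rule `ab ⇒ cd`, stored as `((a,b),(c,d))`; symbols are naturals. -/
abbrev SRule := (ℕ × ℕ) × (ℕ × ℕ)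

/-- One-step rewriting of a simple semi-Thue system given by a list of rules. -/
def SStep (Rs : List SRule) (u v : List ℕ) : Prop :=
  ∃ x y a b c d, ((a, b), (c, d)) ∈ Rs ∧ u = x ++ a :: b :: y ∧ v = x ++ c :: d :: y

/-- Many-step rewriting `⇒*`. -/
def SRew (Rs : List SRule) : List ℕ → List ℕ → Prop := Relation.ReflTransGen (SStep Rs)

/-! Extended alphabet `𝒜 = {0,…,K} ∪ {$, •, ⊤, ⊥}` of size `K+5`, encoded as
`0,…,K` for letters, `K+1` for `$`, `K+2` for `•`, `K+3` for `⊤`, `K+4` for `⊥`. -/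

/-- The simple type `κ` with `|𝒜| = K+5` argument positions. -/
def tyK (K : ℕ) : Ty := arrN (K + 5) .atom

/-- `κ → κ`, the type of `p_j`. -/
def tyP (K : ℕ) : Ty := .arr (tyK K) (tyK K)

/-- `(κ→κ) → κ → κ`, the type of `z_0` and of each `r_i`. -/
def tyZ0 (K : ℕ) : Ty := .arr (tyP K) (.arr (tyK K) (tyK K))

/-- `(κ→κ) → ((κ→κ) → κ) → κ`, the type of `z_⋆`. -/
def tyZstar (K : ℕ) : Ty := .arr (tyP K) (.arr (.arr (tyP K) (tyK K)) (tyK K))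

/-- The variable `s_i` under the `K+5` binders `λ s_0 … s_K s_$ s_• s_⊤ s_⊥`. -/
def sv (K i : ℕ) : Tm := .var (K + 4 - i)

/-- `case x of {…}`: the application `x N_0 N_1 … N_K N_$ N_• N_⊤ N_⊥`,
where the branch for symbol `i` is `f i`. -/
def caseOf (K : ℕ) (x : Tm) (f : ℕ → Tm) : Tm := appList x ((List.range (K + 5)).map f)

/-- The projection `π_i = λ s_0 … s_⊥ . s_i`. -/
def piTm (K i : ℕ) : Tm := lamN (K + 5) (sv K i)

/-- `δ_i = λx. λ s_0 … s_⊥ . case x of {⊤ ↦ s_i} else s_⊥`. -/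
def deltaTm (K i : ℕ) : Tm :=
  .lam (lamN (K + 5) (caseOf K (.var (K + 5))
    (fun j => if j = K + 3 then sv K i else sv K (K + 4))))

/-- `H_⋆ = λh.λg.λ s_0 … s_⊥ . case (g δ_•) of {$ ↦ s_$} else s_⊥`. -/
def Hstar (K : ℕ) : Tm :=
  .lam (.lam (lamN (K + 5) (caseOf K (.app (.var (K + 5)) (deltaTm K (K + 2)))
    (fun j => if j = K + 1 then sv K (K + 1) else sv K (K + 4)))))

/-- `H_0 = λh.λx.λ s_0 … s_⊥ . case x of {1 ↦ s_$} else s_⊥`. -/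
def H0 (K : ℕ) : Tm :=
  .lam (.lam (lamN (K + 5) (caseOf K (.var (K + 5))
    (fun j => if j = 1 then sv K (K + 1) else sv K (K + 4)))))

/-- `H_R = λh.λx.λ s_0 … s_⊥ . case (h π_⊤) of {• ↦ case x of {1 ↦ s_1} else s_⊥} else s_⊥`. -/
def HR (K : ℕ) : Tm :=
  .lam (.lam (lamN (K + 5) (caseOf K (.app (.var (K + 6)) (piTm K (K + 3)))
    (fun j => if j = K + 2 then
        caseOf K (.var (K + 5)) (fun j' => if j' = 1 then sv K 1 else sv K (K + 4))
      else sv K (K + 4)))))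

/-- `G_⋆` (word expansion). -/
def Gstar (K : ℕ) : Tm :=
  .lam (.lam (lamN (K + 5) (caseOf K (.app (.var (K + 6)) (piTm K (K + 3))) (fun j =>
    if j = K + 2 then
      caseOf K (.app (.var (K + 5)) (deltaTm K (K + 2))) (fun j1 =>
        if j1 = 0 then sv K 0
        else if j1 = K + 1 then
          caseOf K (.app (.var (K + 5)) (deltaTm K 0))
            (fun j2 => if j2 = 1 then sv K (K + 1) else sv K (K + 4))
        else sv K (K + 4))
    else if j = 0 then
      caseOf K (.app (.var (K + 5)) (deltaTm K 1))
        (fun j1 => if j1 = 0 then sv K 1 else sv K (K + 4))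
    else if j = 1 then
      caseOf K (.app (.var (K + 5)) (deltaTm K (K + 2)))
        (fun j1 => if j1 = 0 then sv K 0 else sv K (K + 4))
    else sv K (K + 4)))))

/-- `G_0` (initialization with 0s). -/
def G0 (K : ℕ) : Tm :=
  .lam (.lam (lamN (K + 5) (caseOf K (.app (.var (K + 6)) (piTm K (K + 3))) (fun j =>
    if j = K + 2 then
      caseOf K (.var (K + 5))
        (fun j1 => if j1 = 0 then sv K 0 else if j1 = 1 then sv K (K + 1) else sv K (K + 4))
    else if j = 0 then
      caseOf K (.var (K + 5)) (fun j1 => if j1 = 0 then sv K 1 else sv K (K + 4))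
    else if j = 1 then
      caseOf K (.var (K + 5)) (fun j1 => if j1 = 0 then sv K 0 else sv K (K + 4))
    else sv K (K + 4)))))

/-- `G_{ab⇒cd}` (rule application), for the rule `R = ((a,b),(c,d))`. -/
def Grule (K : ℕ) (R : SRule) : Tm :=
  .lam (.lam (lamN (K + 5) (caseOf K (.app (.var (K + 6)) (piTm K (K + 3))) (fun j =>
    if j = K + 2 then
      caseOf K (.var (K + 5)) (fun j1 => sv K j1)
    else if j = 0 then
      caseOf K (.var (K + 5)) (fun j1 => if j1 = R.2.2 then sv K R.1.2 else sv K (K + 4))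
    else if j = 1 then
      caseOf K (.var (K + 5)) (fun j1 => if j1 = R.2.1 then sv K R.1.1 else sv K (K + 4))
    else sv K (K + 4)))))

/-- `G_j^i`: `δ_1` if `i = j`, `δ_0` if `i = j+1`, `δ_•` otherwise. -/
def Gji (K i j : ℕ) : Tm :=
  if i = j then deltaTm K 1 else if i = j + 1 then deltaTm K 0 else deltaTm K (K + 2)

/-! De Bruijn convention for the free variables of terms in `Q_m`, `R_m`
(for a system with `L` rules): `p_j ↦ var (m - j)` (so `p_m ↦ var 0`, …, `p_1 ↦ var (m-1)`),
`z_⋆ ↦ var m`, `z_1 ↦ var (m+1)`, `z_0 ↦ var (m+2)`, `r_i ↦ var (m+3+L-i)`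
(so `r_L ↦ var (m+3)`, …, `r_1 ↦ var (m+2+L)`). -/

/-- The type environment `Γ_m` (as a de Bruijn context). -/
def GammaEnv (L K m : ℕ) : List Ty :=
  List.replicate m (tyP K) ++ tyZstar K :: tyK K :: tyZ0 K :: List.replicate L (tyZ0 K)

/-- The set `Q_m` of terms (for a system with `L` rules). -/
inductive Qset (L : ℕ) : ℕ → Tm → Prop
  | z1 (m : ℕ) : Qset L m (.var (m + 1))
  | rule (m i j : ℕ) (M : Tm) : 1 ≤ i → i ≤ L → 1 ≤ j → j ≤ m → Qset L m M →
      Qset L m (.app (.app (.var (m + 3 + L - i)) (.var (m - j))) M)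
  | ruleEta (m i j : ℕ) (M : Tm) : 1 ≤ i → i ≤ L → 1 ≤ j → j ≤ m → Qset L m M →
      Qset L m (.app (.app (.var (m + 3 + L - i)) (.lam (.app (.var (m - j + 1)) (.var 0)))) M)

/-- The set `R_m` of terms (for a system with `L` rules). -/
inductive Rset (L : ℕ) : ℕ → Tm → Prop
  | init (m : ℕ) (N M : Tm) : Qset L m M → Rset L m (.app (.app (.var (m + 2)) N) M)
  | expand (m : ℕ) (N M : Tm) : Rset L (m + 1) M → Rset L m (.app (.app (.var m) N) (.lam M))

/-- A simultaneous substitution on the free variables of terms in `Q_m`/`R_m`: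
`p_j ↦ P j`, `z_⋆ ↦ Xstar`, `z_1 ↦ X1`, `z_0 ↦ X0`, `r_i ↦ Xr i`; other variables fixed. -/
def mkSub (L m : ℕ) (P : ℕ → Tm) (Xstar X1 X0 : Tm) (Xr : ℕ → Tm) : ℕ → Tm := fun k =>
  if k < m then P (m - k)
  else if k = m then Xstar
  else if k = m + 1 then X1
  else if k = m + 2 then X0
  else if k < m + 3 + L then Xr (m + 3 + L - k)
  else .var k

/-- The substitution `S_F` combined with `[p_j := P j]`; the fixed free variable `u`
is taken to be `var 0` (in the resulting scope). -/
def SF (L m : ℕ) (P : ℕ → Tm) : ℕ → Tm :=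
  mkSub L m P (.lam (.lam (.app (.var 0) Itm))) (.var 0) (.lam Itm) (fun _ => Itm)

/-- The substitution `S_H` combined with `[p_j := P j]`. -/
def SH (L K m : ℕ) (P : ℕ → Tm) : ℕ → Tm :=
  mkSub L m P (Hstar K) (piTm K 1) (H0 K) (fun _ => HR K)

/-- The substitution `S_G` combined with `[p_j := P j]` (`r_i ↦ G_{R_i}`). -/
def SG (K : ℕ) (Rs : List SRule) (m : ℕ) (P : ℕ → Tm) : ℕ → Tm :=
  mkSub Rs.length m P (Gstar K) (piTm K 1) (G0 K)
    (fun i => Grule K (Rs.getD (i - 1) ((0, 0), (0, 0))))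

/-- The simple type `σ_𝔖 = Γ_1(r_1) → ⋯ → Γ_1(r_L) → Γ_1(z_0) → Γ_1(z_1) → Γ_1(z_⋆) → Γ_1(p_1) → κ`. -/
def sigmaTy (L K : ℕ) : Ty :=
  (List.replicate L (tyZ0 K) ++ [tyZ0 K, tyK K, tyZstar K, tyP K]).foldr .arr (tyK K)
/-! ### Sigma calculus -/

theorem upRen_ext {ξ ζ : ℕ → ℕ} (h : ∀ i, ξ i = ζ i) : ∀ i, upRen ξ i = upRen ζ i := by
  intro i; cases i <;> simp [upRen, h]

theorem rename_ext {ξ ζ : ℕ → ℕ} (h : ∀ i, ξ i = ζ i) (M : Tm) : rename ξ M = rename ζ M := by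
  induction M generalizing ξ ζ with
  | var n => simp [rename, h]
  | app s t ihs iht => simp [rename, ihs h, iht h]
  | lam s ih => simp [rename, ih (upRen_ext h)]

theorem up_ext {σ τ : ℕ → Tm} (h : ∀ i, σ i = τ i) : ∀ i, up σ i = up τ i := by
  intro i; cases i <;> simp [up, h]

theorem subst_ext {σ τ : ℕ → Tm} (h : ∀ i, σ i = τ i) (M : Tm) : subst σ M = subst τ M := by
  induction M generalizing σ τ with
  | var n => simp [subst, h]
  | app s t ihs iht => simp [subst, ihs h, iht h]
  | lam s ih => simp [subst, ih (up_ext h)]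

theorem rename_rename (ξ ζ : ℕ → ℕ) (M : Tm) :
    rename ξ (rename ζ M) = rename (fun i => ξ (ζ i)) M := by
  induction M generalizing ξ ζ with
  | var n => simp [rename]
  | app s t ihs iht => simp [rename, ihs, iht]
  | lam s ih =>
      simp only [rename, ih]
      congr 1
      apply rename_ext
      intro i; cases i <;> simp [upRen]

theorem subst_rename (σ : ℕ → Tm) (ξ : ℕ → ℕ) (M : Tm) :
    subst σ (rename ξ M) = subst (fun i => σ (ξ i)) M := by
  induction M generalizing σ ξ with
  | var n => simp [rename, subst]
  | app s t ihs iht => simp [rename, subst, ihs, iht]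
  | lam s ih =>
      simp only [rename, subst, ih]
      congr 1
      apply subst_ext
      intro i; cases i <;> simp [up, upRen]

theorem rename_subst (ξ : ℕ → ℕ) (σ : ℕ → Tm) (M : Tm) :
    rename ξ (subst σ M) = subst (fun i => rename ξ (σ i)) M := by
  induction M generalizing σ ξ with
  | var n => simp [rename, subst]
  | app s t ihs iht => simp [rename, subst, ihs, iht]
  | lam s ih =>
      simp only [rename, subst, ih]
      congr 1
      apply subst_ext
      intro i; cases i with
      | zero => simp [up, rename, upRen]
      | succ n =>
          simp only [up, rename_rename]
          apply rename_ext
          intro j; simp [upRen]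

theorem subst_subst (σ τ : ℕ → Tm) (M : Tm) :
    subst σ (subst τ M) = subst (fun i => subst σ (τ i)) M := by
  induction M generalizing σ τ with
  | var n => simp [subst]
  | app s t ihs iht => simp [subst, ihs, iht]
  | lam s ih =>
      simp only [subst, ih]
      congr 1
      apply subst_ext
      intro i; cases i with
      | zero => simp [up, subst]
      | succ n =>
          simp only [up, subst_rename, rename_subst]

theorem subst_id (M : Tm) : subst .var M = M := by
  induction M with
  | var n => simp [subst]
  | app s t ihs iht => simp [subst, ihs, iht]
  | lam s ih =>
      simp only [subst]
      rw [subst_ext (τ := Tm.var) _ s, ih]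
      intro i; cases i <;> simp [up, rename]

theorem rename_eq_subst (ξ : ℕ → ℕ) (M : Tm) : rename ξ M = subst (fun i => .var (ξ i)) M := by
  induction M generalizing ξ with
  | var n => simp [rename, subst]
  | app s t ihs iht => simp [rename, subst, ihs, iht]
  | lam s ih =>
      simp only [rename, subst, ih]
      congr 1
      apply subst_ext
      intro i; cases i <;> simp [up, upRen, rename]

/-- Iterated `up`. -/
def upN : ℕ → (ℕ → Tm) → ℕ → Tm
  | 0, σ => σ
  | n + 1, σ => up (upN n σ)

theorem upN_ext {σ τ : ℕ → Tm} (h : ∀ i, σ i = τ i) (k : ℕ) : ∀ i, upN k σ i = upN k τ i := by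
  induction k with
  | zero => exact h
  | succ n ih => exact up_ext ih

theorem upN_lt (σ : ℕ → Tm) (k i : ℕ) (h : i < k) : upN k σ i = .var i := by
  induction k generalizing i with
  | zero => omega
  | succ n ih =>
      cases i with
      | zero => rfl
      | succ j => simp [upN, up, ih j (by omega), rename]

theorem rename_id (ξ : ℕ → ℕ) (h : ∀ i, ξ i = i) (M : Tm) : rename ξ M = M := by
  rw [rename_eq_subst]
  rw [subst_ext (τ := Tm.var) (fun i => by rw [h])]
  exact subst_id M

theorem upN_ge (σ : ℕ → Tm) (k i : ℕ) (h : k ≤ i) :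
    upN k σ i = rename (fun j => j + k) (σ (i - k)) := by
  induction k generalizing i with
  | zero =>
      simp only [upN, Nat.sub_zero]
      rw [rename_id (fun j => j + 0) (fun j => rfl)]
  | succ n ih =>
      cases i with
      | zero => omega
      | succ j =>
          simp only [upN, up, ih j (by omega), rename_rename]
          have : j + 1 - (n+1) = j - n := by omega
          rw [this]
          apply rename_ext
          intro i; omega

theorem upN_up (σ : ℕ → Tm) (n : ℕ) : ∀ i, upN n (up σ) i = upN (n + 1) σ i := by
  induction n with
  | zero => intro i; rfl
  | succ k ih => exact up_ext ih

theorem subst_lamN (σ : ℕ → Tm) (k : ℕ) (M : Tm) :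
    subst σ (lamN k M) = lamN k (subst (upN k σ) M) := by
  induction k generalizing σ with
  | zero => rfl
  | succ n ih =>
      simp only [lamN, subst, ih]
      congr 1
      congr 1
      apply subst_ext
      exact upN_up σ n
/-! ### Multi-step reduction and congruences -/

def Red : Tm → Tm → Prop := Relation.ReflTransGen Step

theorem Red.refl (M : Tm) : Red M M := Relation.ReflTransGen.refl

theorem Red.trans {M N P : Tm} (h1 : Red M N) (h2 : Red N P) : Red M P :=
  Relation.ReflTransGen.trans h1 h2

theorem Red.ofStep {M N : Tm} (h : Step M N) : Red M N := Relation.ReflTransGen.single h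

theorem Red.appL {M M' : Tm} (N : Tm) (h : Red M M') : Red (.app M N) (.app M' N) :=
  Relation.ReflTransGen.lift (fun s => Tm.app s N) (fun _ _ hs => Step.appL N hs) _ _ h

theorem Red.appR (M : Tm) {N N' : Tm} (h : Red N N') : Red (.app M N) (.app M N') :=
  Relation.ReflTransGen.lift (fun s => Tm.app M s) (fun _ _ hs => Step.appR M hs) _ _ h

theorem Red.lam {M M' : Tm} (h : Red M M') : Red (.lam M) (.lam M') :=
  Relation.ReflTransGen.lift Tm.lam (fun _ _ hs => Step.lam hs) _ _ h

theorem Red.lamN {M M' : Tm} (k : ℕ) (h : Red M M') : Red (lamN k M) (lamN k M') := by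
  induction k with
  | zero => exact h
  | succ n ih => exact Red.lam ih

theorem Red.appList {M M' : Tm} (l : List Tm) (h : Red M M') :
    Red (appList M l) (appList M' l) := by
  induction l generalizing M M' with
  | nil => exact h
  | cons N l ih => exact ih (Red.appL N h)

theorem Conv.ofRed {M N : Tm} (h : Red M N) : Conv M N := by
  induction h with
  | refl => exact Relation.EqvGen.refl M
  | tail _ hs ih => exact Relation.EqvGen.trans _ _ _ ih (Relation.EqvGen.rel _ _ hs)

theorem Conv.refl (M : Tm) : Conv M M := Relation.EqvGen.refl M

theorem Conv.symm {M N : Tm} (h : Conv M N) : Conv N M := Relation.EqvGen.symm M N h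

theorem Conv.trans {M N P : Tm} (h1 : Conv M N) (h2 : Conv N P) : Conv M P :=
  Relation.EqvGen.trans M N P h1 h2

theorem Conv.appR (M : Tm) {N N' : Tm} (h : Conv N N') : Conv (.app M N) (.app M N') := by
  induction h with
  | rel _ _ hs => exact Relation.EqvGen.rel _ _ (Step.appR M hs)
  | refl _ => exact Conv.refl _
  | symm _ _ _ ih => exact Conv.symm ih
  | trans _ _ _ _ _ ih1 ih2 => exact Conv.trans ih1 ih2

/-! ### Applying an iterated abstraction to a list of arguments -/

/-- The substitution induced by a list of arguments (first argument = outermost binder). -/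
def listSub (l : List Tm) : ℕ → Tm := fun i =>
  if i < l.length then l.getD (l.length - 1 - i) (.var 0) else .var (i - l.length)

theorem appList_lamN (l : List Tm) (M : Tm) :
    Red (appList (lamN l.length M) l) (subst (listSub l) M) := by
  induction l generalizing M with
  | nil =>
      simp only [appList, List.foldl_nil]
      rw [show subst (listSub []) M = M from ?_]
      · exact Red.refl M
      · rw [subst_ext (τ := Tm.var) ?_, subst_id]
        intro i; simp [listSub]
  | cons N l ih =>
      show Red (appList (.app (.lam (lamN l.length M)) N) l) _
      have h1 : Red (appList (.app (.lam (lamN l.length M)) N) l)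
          (appList (subst1 N (lamN l.length M)) l) :=
        Red.appList l (Red.ofStep (Step.beta _ N))
      refine h1.trans ?_
      rw [show subst1 N (lamN l.length M)
          = lamN l.length (subst (upN l.length (scons N .var)) M) from subst_lamN _ _ _]
      refine (ih _).trans ?_
      rw [subst_subst]
      rw [subst_ext (τ := listSub (N :: l)) ?_]
      · exact Red.refl _
      intro i
      rcases lt_trichotomy i l.length with h | h | h
      · rw [upN_lt _ _ _ h]
        simp only [subst, listSub]
        have h2 : i < (N :: l).length := by simp; omega
        simp only [if_pos h, if_pos h2, List.length_cons]
        have : l.length + 1 - 1 - i = (l.length - 1 - i) + 1 := by omega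
        rw [this, List.getD_cons_succ]
        rw [if_pos (show i < l.length + 1 by omega)]
      · subst h
        rw [upN_ge _ _ _ (le_refl _)]
        simp only [Nat.sub_self, scons]
        rw [rename_eq_subst, subst_subst]
        rw [subst_ext (τ := Tm.var) (fun j => by
          simp only [subst, listSub]
          rw [if_neg (by omega)]
          congr 1
          omega), subst_id]
        simp only [listSub, List.length_cons, Nat.add_sub_cancel, Nat.sub_self]
        rw [if_pos (by omega)]
        rfl
      · rw [upN_ge _ _ _ (by omega)]
        have : i - l.length = (i - l.length - 1) + 1 := by omega
        rw [this]
        simp only [scons, rename, listSub, subst]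
        rw [if_neg (by omega), if_neg (by simp; omega)]
        congr 1; simp; omega

/-- Generic double β-reduction: `(λλ B) H X ⇒* B[x₁ := H, x₀ := X]`. -/
theorem doubleBeta (B H X : Tm) :
    Red (.app (.app (.lam (.lam B)) H) X) (subst (scons X (scons H .var)) B) := by
  have h1 : Red (.app (.app (.lam (.lam B)) H) X) (.app (subst1 H (.lam B)) X) :=
    Red.appL X (Red.ofStep (Step.beta _ H))
  refine h1.trans ?_
  simp only [subst1, subst]
  refine (Red.ofStep (Step.beta _ X)).trans ?_
  rw [show subst1 X (subst (up (scons H Tm.var)) B)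
      = subst (scons X (scons H .var)) B from ?_]
  · exact Red.refl _
  rw [subst1, subst_subst]
  apply subst_ext
  intro i
  cases i with
  | zero => rfl
  | succ n =>
      simp only [up, subst_rename]
      cases n with
      | zero =>
          simp only [scons]
          rw [subst_ext (τ := Tm.var) (fun j => rfl), subst_id]
      | succ j => rfl
/-! ### Closed terms -/

def ClosedN : ℕ → Tm → Prop
  | n, .var k => k < n
  | n, .app s t => ClosedN n s ∧ ClosedN n t
  | n, .lam s => ClosedN (n + 1) s

theorem ClosedN_subst {n : ℕ} {M : Tm} (h : ClosedN n M) {σ : ℕ → Tm}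
    (hσ : ∀ i, i < n → σ i = .var i) : subst σ M = M := by
  induction M generalizing n σ with
  | var k => exact hσ k h
  | app s t ihs iht => exact congrArg₂ Tm.app (ihs h.1 hσ) (iht h.2 hσ)
  | lam s ih =>
      simp only [subst]
      congr 1
      refine ih (n := n + 1) h ?_
      intro i hi
      cases i with
      | zero => rfl
      | succ j => simp only [up, hσ j (by omega), rename]

theorem closed_subst {M : Tm} (h : ClosedN 0 M) (σ : ℕ → Tm) : subst σ M = M :=
  ClosedN_subst h (fun i hi => absurd hi (by omega))

theorem closed_rename {M : Tm} (h : ClosedN 0 M) (ξ : ℕ → ℕ) : rename ξ M = M := by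
  rw [rename_eq_subst]; exact closed_subst h _

theorem ClosedN_mono {n n' : ℕ} (hle : n ≤ n') {M : Tm} (h : ClosedN n M) : ClosedN n' M := by
  induction M generalizing n n' with
  | var k => exact lt_of_lt_of_le h hle
  | app s t ihs iht => exact ⟨ihs hle h.1, iht hle h.2⟩
  | lam s ih => exact ih (by omega) h

theorem ClosedN_lamN {n k : ℕ} {M : Tm} (h : ClosedN (n + k) M) : ClosedN n (lamN k M) := by
  induction k generalizing n with
  | zero => exact h
  | succ j ih =>
      show ClosedN (n + 1) (lamN j M)
      apply ih
      have heq : n + 1 + j = n + (j + 1) := by omega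
      rw [heq]
      exact h

theorem ClosedN_appList {n : ℕ} {X : Tm} {l : List Tm} (hX : ClosedN n X)
    (hl : ∀ t ∈ l, ClosedN n t) : ClosedN n (appList X l) := by
  induction l generalizing X with
  | nil => exact hX
  | cons N l ih =>
      exact ih ⟨hX, hl N (by simp)⟩ (fun t ht => hl t (by simp [ht]))

theorem ClosedN_caseOf {n K : ℕ} {X : Tm} {f : ℕ → Tm} (hX : ClosedN n X)
    (hf : ∀ j, j < K + 5 → ClosedN n (f j)) : ClosedN n (caseOf K X f) := by
  refine ClosedN_appList hX ?_
  intro t ht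
  simp only [List.mem_map, List.mem_range] at ht
  obtain ⟨j, hj, rfl⟩ := ht
  exact hf j hj

theorem ClosedN_sv (K i n : ℕ) : ClosedN (K + 5 + n) (sv K i) := by
  show K + 4 - i < K + 5 + n; omega

theorem closed_piTm (K i : ℕ) : ClosedN 0 (piTm K i) := by
  refine ClosedN_lamN ?_
  have := ClosedN_sv K i 0
  simpa using this

theorem closed_deltaTm (K i : ℕ) : ClosedN 0 (deltaTm K i) := by
  show ClosedN 1 _
  refine ClosedN_lamN (n := 1) ?_
  refine ClosedN_caseOf ?_ ?_
  · show K + 5 < 1 + (K + 5); omega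
  · intro j hj
    split <;> exact ClosedN_mono (by omega) (ClosedN_sv K _ 0)

theorem closed_Grule (K : ℕ) (R : SRule) : ClosedN 0 (Grule K R) := by
  show ClosedN 1 (.lam _)
  show ClosedN 2 _
  refine ClosedN_lamN (n := 2) ?_
  refine ClosedN_caseOf ⟨?_, ?_⟩ ?_
  · show K + 6 < 2 + (K + 5); omega
  · exact ClosedN_mono (by omega) (closed_piTm K (K + 3))
  · intro j hj
    have hsv : ∀ i, ClosedN (2 + (K + 5)) (sv K i) := fun i =>
      ClosedN_mono (by omega) (ClosedN_sv K i 0)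
    by_cases h2 : j = K + 2
    · rw [if_pos h2]
      refine ClosedN_caseOf ?_ (fun _ _ => hsv _)
      show K + 5 < 2 + (K + 5); omega
    rw [if_neg h2]
    by_cases h0 : j = 0
    · rw [if_pos h0]
      refine ClosedN_caseOf ?_ ?_
      · show K + 5 < 2 + (K + 5); omega
      · intro j1 _; split <;> exact hsv _
    rw [if_neg h0]
    by_cases h1 : j = 1
    · rw [if_pos h1]
      refine ClosedN_caseOf ?_ ?_
      · show K + 5 < 2 + (K + 5); omega
      · intro j1 _; split <;> exact hsv _
    rw [if_neg h1]
    exact hsv _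

theorem closed_Gji (K i j : ℕ) : ClosedN 0 (Gji K i j) := by
  unfold Gji; split
  · exact closed_deltaTm K 1
  split
  · exact closed_deltaTm K 0
  · exact closed_deltaTm K (K + 2)

/-! ### Substitution through `caseOf` -/

theorem subst_appList (σ : ℕ → Tm) (X : Tm) (l : List Tm) :
    subst σ (appList X l) = appList (subst σ X) (l.map (subst σ)) := by
  induction l generalizing X with
  | nil => rfl
  | cons N l ih => exact ih (.app X N)

theorem subst_caseOf (σ : ℕ → Tm) (K : ℕ) (X : Tm) (f : ℕ → Tm) :
    subst σ (caseOf K X f) = caseOf K (subst σ X) (fun j => subst σ (f j)) := by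
  unfold caseOf
  rw [subst_appList, List.map_map]
  rfl

theorem caseOf_congr (K : ℕ) (X : Tm) {f g : ℕ → Tm} (h : ∀ j, j < K + 5 → f j = g j) :
    caseOf K X f = caseOf K X g := by
  unfold caseOf
  congr 1
  apply List.map_congr_left
  intro j hj
  exact h j (List.mem_range.mp hj)

theorem getD_range_map (n j : ℕ) (f : ℕ → Tm) (hj : j < n) (d : Tm) :
    ((List.range n).map f).getD j d = f j := by
  rw [List.getD_eq_getElem _ _ (by simpa using hj)]
  simp
/-! ### Evaluation lemmas -/

theorem case_pi (K j : ℕ) (hj : j ≤ K + 4) (f : ℕ → Tm) :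
    Red (caseOf K (piTm K j) f) (f j) := by
  have hlen : ((List.range (K + 5)).map f).length = K + 5 := by simp
  have h1 : Red (appList (lamN (K + 5) (sv K j)) ((List.range (K + 5)).map f))
      (subst (listSub ((List.range (K + 5)).map f)) (sv K j)) := by
    have := appList_lamN ((List.range (K + 5)).map f) (sv K j)
    rwa [hlen] at this
  refine h1.trans ?_
  show Red (listSub _ (K + 4 - j)) _
  unfold listSub
  rw [hlen, if_pos (by omega)]
  have : K + 5 - 1 - (K + 4 - j) = j := by omega
  rw [this, getD_range_map _ _ _ (by omega)]
  exact Red.refl _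

theorem delta_pi (K t : ℕ) (ht : t ≤ K + 4) :
    Red (.app (deltaTm K t) (piTm K (K + 3))) (piTm K t) := by
  have h1 : Red (.app (deltaTm K t) (piTm K (K + 3)))
      (subst1 (piTm K (K + 3)) (lamN (K + 5) (caseOf K (.var (K + 5))
        (fun j => if j = K + 3 then sv K t else sv K (K + 4))))) :=
    Red.ofStep (Step.beta _ _)
  refine h1.trans ?_
  rw [subst1, subst_lamN, subst_caseOf]
  have hhead : subst (upN (K + 5) (scons (piTm K (K + 3)) Tm.var)) (.var (K + 5))
      = piTm K (K + 3) := by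
    show upN (K + 5) _ (K + 5) = _
    rw [upN_ge _ _ _ (le_refl _), Nat.sub_self]
    exact closed_rename (closed_piTm K (K + 3)) _
  rw [hhead]
  rw [caseOf_congr K _ (g := fun j => if j = K + 3 then sv K t else sv K (K + 4)) ?_]
  · refine (Red.lamN (K + 5) ((case_pi K (K + 3) (by omega) _))).trans ?_
    rw [if_pos rfl]
    exact Red.refl _
  · intro j hj
    by_cases h : j = K + 3 <;> simp only [if_pos, if_neg, h, if_true, if_false] <;>
      exact ClosedN_subst (ClosedN_mono (by omega) (ClosedN_sv K _ 0))
        (fun i hi => upN_lt _ _ _ hi)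

/-- Helper: pushing a closed double-argument substitution through a `Grule`-style body. -/
theorem subst_var_top (H X : Tm) (hH : ClosedN 0 H) (hX : ClosedN 0 X) (K : ℕ) :
    (subst (upN (K + 5) (scons X (scons H Tm.var))) (.var (K + 5)) = X
    ∧ subst (upN (K + 5) (scons X (scons H Tm.var))) (.var (K + 6)) = H) := by
  constructor
  · show upN (K + 5) _ (K + 5) = _
    rw [upN_ge _ _ _ (le_refl _), Nat.sub_self]
    exact closed_rename hX _
  · show upN (K + 5) _ (K + 6) = _
    rw [upN_ge _ _ _ (by omega)]
    have : K + 6 - (K + 5) = 1 := by omega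
    rw [this]
    exact closed_rename hH _

theorem grule_red (K : ℕ) (hK : 1 ≤ K) (R : SRule) (t e r : ℕ)
    (ht : t ≤ K + 4) (he : e ≤ K + 4) (hr : r ≤ K + 4)
    (hcase : (t = K + 2 ∧ r = e) ∨ (t = 1 ∧ e = R.2.1 ∧ r = R.1.1)
      ∨ (t = 0 ∧ e = R.2.2 ∧ r = R.1.2)) :
    Red (.app (.app (Grule K R) (deltaTm K t)) (piTm K e)) (piTm K r) := by
  set H := deltaTm K t with hHdef
  set X := piTm K e with hXdef
  have hH : ClosedN 0 H := closed_deltaTm K t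
  have hX : ClosedN 0 X := closed_piTm K e
  set σ := scons X (scons H Tm.var) with hσdef
  have h1 := doubleBeta (lamN (K + 5) (caseOf K (.app (.var (K + 6)) (piTm K (K + 3)))
    (fun j =>
      if j = K + 2 then caseOf K (.var (K + 5)) (fun j1 => sv K j1)
      else if j = 0 then
        caseOf K (.var (K + 5)) (fun j1 => if j1 = R.2.2 then sv K R.1.2 else sv K (K + 4))
      else if j = 1 then
        caseOf K (.var (K + 5)) (fun j1 => if j1 = R.2.1 then sv K R.1.1 else sv K (K + 4))
      else sv K (K + 4)))) H X
  refine Red.trans (show Red _ _ from h1) ?_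
  rw [subst_lamN, subst_caseOf]
  obtain ⟨hvX, hvH⟩ := subst_var_top H X hH hX K
  rw [show subst (upN (K + 5) σ) (.app (.var (K + 6)) (piTm K (K + 3)))
      = .app H (piTm K (K + 3)) from by
    show Tm.app (subst _ _) (subst _ _) = _
    rw [hvH, closed_subst (closed_piTm K (K + 3))]]
  -- reduce the scrutinee  H π_⊤  to  π_t
  have hsc : Red (caseOf K (.app H (piTm K (K + 3)))
        (fun j => subst (upN (K + 5) σ) _))
      (caseOf K (piTm K t) (fun j => subst (upN (K + 5) σ)
        (if j = K + 2 then caseOf K (.var (K + 5)) (fun j1 => sv K j1)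
        else if j = 0 then
          caseOf K (.var (K + 5)) (fun j1 => if j1 = R.2.2 then sv K R.1.2 else sv K (K + 4))
        else if j = 1 then
          caseOf K (.var (K + 5)) (fun j1 => if j1 = R.2.1 then sv K R.1.1 else sv K (K + 4))
        else sv K (K + 4)))) :=
    Red.appList _ (delta_pi K t ht)
  show Red (lamN (K + 5) _) (lamN (K + 5) (sv K r))
  refine Red.lamN (K + 5) (hsc.trans ?_)
  · refine (case_pi K t ht _).trans ?_
    -- now compute the branch at t and reduce it to sv K r
    rcases hcase with ⟨rfl, rfl⟩ | ⟨rfl, he2, hr2⟩ | ⟨rfl, he2, hr2⟩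
    · rw [if_pos rfl, subst_caseOf, hvX]
      rw [caseOf_congr K _ (g := fun j1 => sv K j1) (fun j1 _ =>
        ClosedN_subst (ClosedN_mono (by omega) (ClosedN_sv K _ 0)) (fun i hi => upN_lt _ _ _ hi))]
      exact case_pi K _ he _
    · rw [if_neg (by omega), if_neg (by omega), if_pos rfl, subst_caseOf, hvX]
      rw [caseOf_congr K _ (g := fun j1 => if j1 = R.2.1 then sv K R.1.1 else sv K (K + 4))
        (fun j1 _ => by
          by_cases h' : j1 = R.2.1 <;> simp only [h', if_true, if_false] <;>
            exact ClosedN_subst (ClosedN_mono (by omega) (ClosedN_sv K _ 0))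
              (fun i hi => upN_lt _ _ _ hi))]
      refine (case_pi K e he _).trans ?_
      rw [← he2, if_pos rfl, hr2]
      exact Red.refl _
    · rw [if_neg (by omega), if_pos rfl, subst_caseOf, hvX]
      rw [caseOf_congr K _ (g := fun j1 => if j1 = R.2.2 then sv K R.1.2 else sv K (K + 4))
        (fun j1 _ => by
          by_cases h' : j1 = R.2.2 <;> simp only [h', if_true, if_false] <;>
            exact ClosedN_subst (ClosedN_mono (by omega) (ClosedN_sv K _ 0))
              (fun i hi => upN_lt _ _ _ hi))]
      refine (case_pi K e he _).trans ?_
      rw [← he2, if_pos rfl, hr2]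
      exact Red.refl _
/-! ### Typing -/

theorem gamma_get_p (L K m j : ℕ) (h1 : 1 ≤ j) (h2 : j ≤ m) :
    (GammaEnv L K m)[m - j]? = some (tyP K) := by
  unfold GammaEnv
  rw [List.getElem?_append, if_pos (by simp; omega)]
  simp [List.getElem?_replicate, Nat.sub_lt_of_pos_le h1 h2]

theorem gamma_get_z1 (L K m : ℕ) :
    (GammaEnv L K m)[m + 1]? = some (tyK K) := by
  unfold GammaEnv
  rw [List.getElem?_append, if_neg (by simp)]
  simp

theorem gamma_get_r (L K m i : ℕ) (h1 : 1 ≤ i) (h2 : i ≤ L) :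
    (GammaEnv L K m)[m + 3 + L - i]? = some (tyZ0 K) := by
  unfold GammaEnv
  rw [List.getElem?_append, if_neg (by simp; omega)]
  have : m + 3 + L - i - (List.replicate m (tyP K)).length = L - i + 3 := by simp; omega
  rw [this, show L - i + 3 = L - i + 1 + 1 + 1 from rfl]
  rw [List.getElem?_cons_succ, List.getElem?_cons_succ, List.getElem?_cons_succ]
  simp [List.getElem?_replicate]
  omega

theorem stlc_q (L K m : ℕ) {M : Tm} (h : Qset L m M) :
    Stlc (GammaEnv L K m) M (tyK K) := by
  induction h with
  | z1 => exact .var (gamma_get_z1 L K m)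
  | rule i j M hi1 hi2 hj1 hj2 hQ ih =>
      exact .app (.app (.var (gamma_get_r L K m i hi1 hi2)) (.var (gamma_get_p L K m j hj1 hj2))) ih
  | ruleEta i j M hi1 hi2 hj1 hj2 hQ ih =>
      refine .app (.app (.var (gamma_get_r L K m i hi1 hi2)) ?_) ih
      refine .lam (.app (.var ?_) (.var rfl))
      show (tyK K :: GammaEnv L K m)[m - j + 1]? = some (tyP K)
      simpa using gamma_get_p L K m j hj1 hj2

/-! ### The substitution on `Q`-terms -/

theorem mkSub_p (L m : ℕ) (P : ℕ → Tm) (A B C : Tm) (Xr : ℕ → Tm) (j : ℕ)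
    (h1 : 1 ≤ j) (h2 : j ≤ m) : mkSub L m P A B C Xr (m - j) = P j := by
  unfold mkSub
  rw [if_pos (by omega)]
  congr 1
  omega

theorem mkSub_z1 (L m : ℕ) (P : ℕ → Tm) (A B C : Tm) (Xr : ℕ → Tm) :
    mkSub L m P A B C Xr (m + 1) = B := by
  unfold mkSub
  rw [if_neg (by omega), if_neg (by omega), if_pos rfl]

theorem mkSub_r (L m : ℕ) (P : ℕ → Tm) (A B C : Tm) (Xr : ℕ → Tm) (i : ℕ)
    (h1 : 1 ≤ i) (h2 : i ≤ L) : mkSub L m P A B C Xr (m + 3 + L - i) = Xr i := by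
  unfold mkSub
  rw [if_neg (by omega), if_neg (by omega), if_neg (by omega), if_neg (by omega),
    if_pos (by omega)]
  congr 1
  omega
/-! ### Main theorem -/

theorem getD_range_map' {α : Type _} (n j : ℕ) (f : ℕ → α) (hj : j < n) (d : α) :
    ((List.range n).map f).getD j d = f j := by
  rw [List.getD_eq_getElem _ _ (by simpa using hj)]
  simp

/-- Converse of the Q-semantics lemma: if `a_1 … a_{m+1} ⇒* 1^{m+1}` (with
`a_1, …, a_{m+1} ∈ {0,…,K}` and `m > 0`), then there exists `M ∈ Q_m` with `Γ_m ⊢ M : κ`,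
`S_G(M)[p_1 := G_1^0, …, p_m := G_m^0] =β π_1`, and
`S_G(M)[p_1 := G_1^i, …, p_m := G_m^i] =β π_{a_i}` for every `i ∈ {1,…,m+1}`. -/
theorem Q_ssts_complete (K : ℕ) (hK : 1 ≤ K) (Rs : List SRule) (hL : Rs ≠ [])
    (hsym : ∀ r ∈ Rs, r.1.1 ≤ K ∧ r.1.2 ≤ K ∧ r.2.1 ≤ K ∧ r.2.2 ≤ K)
    (m : ℕ) (hm : 0 < m) (a : ℕ → ℕ) (ha : ∀ i, 1 ≤ i → i ≤ m + 1 → a i ≤ K)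
    (hrew : SRew Rs ((List.range (m + 1)).map (fun k => a (k + 1)))
      (List.replicate (m + 1) 1)) :
    ∃ M : Tm, Qset Rs.length m M ∧
      Stlc (GammaEnv Rs.length K m) M (tyK K) ∧
      Conv (subst (SG K Rs m (fun j => Gji K 0 j)) M) (piTm K 1) ∧
      ∀ i, 1 ≤ i → i ≤ m + 1 →
        Conv (subst (SG K Rs m (fun j => Gji K i j)) M) (piTm K (a i)) := by
  suffices H : ∀ u : List ℕ, SRew Rs u (List.replicate (m + 1) 1) → u.length = m + 1 →
      (∀ z ∈ u, z ≤ K) →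
      ∃ M : Tm, Qset Rs.length m M ∧ Stlc (GammaEnv Rs.length K m) M (tyK K) ∧
        ∀ i, i ≤ m + 1 →
          Conv (subst (SG K Rs m (fun j => Gji K i j)) M)
            (piTm K (if i = 0 then 1 else u.getD (i - 1) 0)) by
    obtain ⟨M, hQ, hT, hC⟩ := H _ hrew (by simp) (by
      intro z hz
      simp only [List.mem_map, List.mem_range] at hz
      obtain ⟨k, hk, rfl⟩ := hz
      exact ha (k + 1) (by omega) (by omega))
    refine ⟨M, hQ, hT, ?_, ?_⟩
    · have := hC 0 (by omega)
      simpa using this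
    · intro i h1 h2
      have := hC i (by omega)
      rw [if_neg (by omega), getD_range_map' _ _ _ (by omega)] at this
      rw [show i - 1 + 1 = i by omega] at this
      exact this
  intro u hu
  induction hu using Relation.ReflTransGen.head_induction_on with
  | refl =>
      intro _ _
      refine ⟨.var (m + 1), Qset.z1 m, stlc_q _ _ _ (Qset.z1 m), ?_⟩
      intro i hi
      have hs : subst (SG K Rs m (fun j => Gji K i j)) (.var (m + 1)) = piTm K 1 := by
        show SG K Rs m (fun j => Gji K i j) (m + 1) = piTm K 1
        unfold SG
        exact mkSub_z1 _ _ _ _ _ _ _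
      rw [hs]
      rcases Nat.eq_zero_or_pos i with h0 | h0
      · rw [if_pos h0]; exact Conv.refl _
      · rw [if_neg (by omega), List.getD_eq_getElem _ _ (by simp; omega),
          List.getElem_replicate]
        exact Conv.refl _
  | head hstep hrest ih =>
      intro hlen hent
      obtain ⟨x, y, aa, bb, cc, dd, hmem, hueq, hveq⟩ := hstep
      set p := x.length with hp
      have hplen : p + 2 + y.length = m + 1 := by
        rw [hueq] at hlen
        simp only [List.length_append, List.length_cons] at hlen
        omega
      have hvlen : (x ++ cc :: dd :: y).length = m + 1 := by simp; omega
      have habK : aa ≤ K := (hsym _ hmem).1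
      have hbbK : bb ≤ K := (hsym _ hmem).2.1
      have hccK : cc ≤ K := (hsym _ hmem).2.2.1
      have hddK : dd ≤ K := (hsym _ hmem).2.2.2
      have hvent : ∀ z ∈ x ++ cc :: dd :: y, z ≤ K := by
        intro z hz
        simp only [List.mem_append, List.mem_cons] at hz
        rcases hz with hz | rfl | rfl | hz
        · exact hent z (by rw [hueq]; simp [hz])
        · exact hccK
        · exact hddK
        · exact hent z (by rw [hueq]; simp [hz])
      rw [← hveq] at hvlen hvent
      obtain ⟨M, hQ, hT, hC⟩ := ih hvlen hvent
      obtain ⟨n, hn, hRn⟩ := List.mem_iff_getElem.mp hmem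
      have hQ' : Qset Rs.length m
          (.app (.app (.var (m + 3 + Rs.length - (n + 1))) (.var (m - (p + 1)))) M) :=
        Qset.rule m (n + 1) (p + 1) M (by omega) (by omega) (by omega) (by omega) hQ
      refine ⟨_, hQ', stlc_q _ _ _ hQ', ?_⟩
      intro i hi
      have e1 : SG K Rs m (fun j => Gji K i j) (m + 3 + Rs.length - (n + 1))
          = Grule K ((aa, bb), (cc, dd)) := by
        unfold SG
        rw [mkSub_r _ _ _ _ _ _ _ (n + 1) (by omega) (by omega)]
        congr 1
        rw [show n + 1 - 1 = n from rfl, List.getD_eq_getElem _ _ hn]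
        exact hRn
      have e2 : SG K Rs m (fun j => Gji K i j) (m - (p + 1)) = Gji K i (p + 1) := by
        unfold SG
        exact mkSub_p _ _ _ _ _ _ _ (p + 1) (by omega) (by omega)
      have hsub : subst (SG K Rs m (fun j => Gji K i j))
            (.app (.app (.var (m + 3 + Rs.length - (n + 1))) (.var (m - (p + 1)))) M)
          = .app (.app (Grule K ((aa, bb), (cc, dd))) (Gji K i (p + 1)))
              (subst (SG K Rs m (fun j => Gji K i j)) M) := by
        simp only [subst]
        rw [e1, e2]
      rw [hsub]
      refine Conv.trans (Conv.appR _ (hC i hi)) (Conv.ofRed ?_)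
      by_cases hi1 : i = p + 1
      · subst hi1
        rw [if_neg (by omega), if_neg (by omega)]
        have hv : (x ++ cc :: dd :: y).getD (p + 1 - 1) 0 = cc := by
          rw [show p + 1 - 1 = p by omega, List.getD_append_right _ _ _ _ (by omega)]
          simp [p]
        have hu' : (x ++ aa :: bb :: y).getD (p + 1 - 1) 0 = aa := by
          rw [show p + 1 - 1 = p by omega, List.getD_append_right _ _ _ _ (by omega)]
          simp [p]
        rw [hveq, hv, hueq, hu']
        rw [show Gji K (p + 1) (p + 1) = deltaTm K 1 from by unfold Gji; rw [if_pos rfl]]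
        exact grule_red K hK _ 1 cc aa (by omega) (by omega) (by omega)
          (Or.inr (Or.inl ⟨rfl, rfl, rfl⟩))
      by_cases hi2 : i = p + 2
      · subst hi2
        rw [if_neg (by omega), if_neg (by omega)]
        have hv : (x ++ cc :: dd :: y).getD (p + 2 - 1) 0 = dd := by
          rw [show p + 2 - 1 = p + 1 by omega, List.getD_append_right _ _ _ _ (by omega)]
          rw [show p + 1 - x.length = 1 from by omega]
          rfl
        have hu' : (x ++ aa :: bb :: y).getD (p + 2 - 1) 0 = bb := by
          rw [show p + 2 - 1 = p + 1 by omega, List.getD_append_right _ _ _ _ (by omega)]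
          rw [show p + 1 - x.length = 1 from by omega]
          rfl
        rw [hveq, hv, hueq, hu']
        rw [show Gji K (p + 2) (p + 1) = deltaTm K 0 from by
          unfold Gji; rw [if_neg (by omega), if_pos rfl]]
        exact grule_red K hK _ 0 dd bb (by omega) (by omega) (by omega)
          (Or.inr (Or.inr ⟨rfl, rfl, rfl⟩))
      · -- identity position
        rw [show Gji K i (p + 1) = deltaTm K (K + 2) from by
          unfold Gji; rw [if_neg (by omega), if_neg (by omega)]]
        rcases Nat.eq_zero_or_pos i with h0 | h0
        · rw [if_pos h0, if_pos h0]
          exact grule_red K hK ((aa, bb), (cc, dd)) (K + 2) 1 1 (by omega) (by omega) (by omega)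
            (Or.inl ⟨rfl, rfl⟩)
        · rw [if_neg (by omega), if_neg (by omega)]
          have hgd : (x ++ cc :: dd :: y).getD (i - 1) 0
              = (x ++ aa :: bb :: y).getD (i - 1) 0 := by
            rcases Nat.lt_or_ge (i - 1) p with hlt | hge
            · rw [List.getD_append _ _ _ _ (by omega), List.getD_append _ _ _ _ (by omega)]
            · have hge2 : i - 1 ≥ p + 2 := by omega
              rw [List.getD_append_right _ _ _ _ (by omega),
                List.getD_append_right _ _ _ _ (by omega)]
              rw [show i - 1 - x.length = (i - 1 - x.length - 2) + 1 + 1 from by omega]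
              rw [List.getD_cons_succ, List.getD_cons_succ, List.getD_cons_succ,
                List.getD_cons_succ]
          have hbound : (x ++ aa :: bb :: y).getD (i - 1) 0 ≤ K := by
            have hlt : i - 1 < (x ++ aa :: bb :: y).length := by
              rw [← hueq]; omega
            rw [List.getD_eq_getElem _ _ hlt]
            exact hent _ (by rw [hueq]; exact List.getElem_mem hlt)
          rw [hveq, hueq] at *
          rw [hgd]
          exact grule_red K hK ((aa, bb), (cc, dd)) (K + 2) _ _ (by omega) (by omega) (by omega)
            (Or.inl ⟨rfl, rfl⟩)
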